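/- Consider the two-layer ReLU network with p-dimensional input, d hidden neurons, q-dimensional output, and design matrix S ∈ ℝ^{n×p}, with weight map ψ₂ : Θ → ℝ^{n×q}. Then the image of weights equals ψ₂(Θ) = { X = [x₁,…,x_q] ∈ ℝ^{n×q} : there exist y₁,…,y_d ∈ C_max(S) such that every column x_j of X lies in the linear span of {𝟙, y₁, …, y_d} }. -/
import Mathlib


/-- ReLU activation. -/
noncomputable def relu (x : ℝ) : ℝ := max x 0

/-- The ReLU cone `C_max(S) = { σ_max(Sa + b𝟙) : a ∈ ℝᵖ, b ∈ ℝ } ⊆ ℝⁿ`. -/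
noncomputable def Cmax {n p : ℕ} (S : Matrix (Fin n) (Fin p) ℝ) : Set (Fin n → ℝ) :=
  {v | ∃ (a : Fin p → ℝ) (b : ℝ), v = fun i => relu (S.mulVec a i + b)}

/-- The weight map `ψ₂ : Θ → ℝ^{n×q}` of the two-layer ReLU network
`ν_θ(s) = A₂ σ_max(A₁ s + b₁) + b₂`, for the design matrix `S ∈ ℝ^{n×p}`. -/
noncomputable def psi2 {p d q n : ℕ} (S : Matrix (Fin n) (Fin p) ℝ)
    (θ : Matrix (Fin d) (Fin p) ℝ × (Fin d → ℝ) × Matrix (Fin q) (Fin d) ℝ × (Fin q → ℝ)) :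
    Matrix (Fin n) (Fin q) ℝ :=
  Matrix.of fun i j =>
    (θ.2.2.1.mulVec (fun l => relu (θ.1.mulVec (fun k => S i k) l + θ.2.1 l)) + θ.2.2.2) j

/-- The image of weights of the two-layer ReLU network `ℝᵖ → ℝᵈ → ℝ^q` consists exactly of the
matrices `X ∈ ℝ^{n×q}` for which there exist `y₁, …, y_d ∈ C_max(S)` such that every column of
`X` lies in `span{𝟙, y₁, …, y_d}`. -/
theorem image_of_weights_eq {p d q n : ℕ} (S : Matrix (Fin n) (Fin p) ℝ) :
    Set.range (psi2 (d := d) (q := q) S) =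
      {X : Matrix (Fin n) (Fin q) ℝ | ∃ y : Fin d → (Fin n → ℝ),
        (∀ j, y j ∈ Cmax S) ∧
        ∀ j : Fin q, (fun i => X i j) ∈
          Submodule.span ℝ (insert (fun _ => (1 : ℝ)) (Set.range y))} := by
  ext X
  constructor
  · rintro ⟨⟨A₁, b₁, A₂, b₂⟩, rfl⟩
    refine ⟨fun l i => relu (A₁.mulVec (fun k => S i k) l + b₁ l), fun l => ⟨fun k => A₁ l k, b₁ l, ?_⟩, fun j => ?_⟩
    · funext i
      simp [Matrix.mulVec, dotProduct, mul_comm]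
    · have h : (fun i => psi2 S (A₁, b₁, A₂, b₂) i j)
          = b₂ j • (fun _ => (1 : ℝ))
            + ∑ l, A₂ j l • (fun i => relu (A₁.mulVec (fun k => S i k) l + b₁ l)) := by
        funext i
        simp [psi2, Matrix.mulVec, dotProduct, Finset.sum_apply, add_comm]
      rw [h]
      refine Submodule.add_mem _
        (Submodule.smul_mem _ _ (Submodule.subset_span (Set.mem_insert _ _)))
        (Submodule.sum_mem _ fun l _ => Submodule.smul_mem _ _
          (Submodule.subset_span (Set.mem_insert_of_mem _ ⟨l, rfl⟩)))
  · rintro ⟨y, hy, hspan⟩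
    choose a b hab using hy
    have key : ∀ j : Fin q, ∃ c : Fin (d + 1) → ℝ,
        ∑ m, c m • (Fin.cons (fun _ => (1 : ℝ)) y : Fin (d + 1) → Fin n → ℝ) m = fun i => X i j := by
      intro j
      have := hspan j
      have hr : insert (fun _ => (1 : ℝ) : Fin n → ℝ) (Set.range y)
          = Set.range (Fin.cons (fun _ => (1 : ℝ)) y : Fin (d + 1) → Fin n → ℝ) :=
        (Fin.range_cons _ _).symm
      rw [hr] at this
      exact (Submodule.mem_span_range_iff_exists_fun ℝ).mp this
    choose c hc using key
    refine ⟨(Matrix.of fun l k => a l k, b, Matrix.of fun j l => c j l.succ, fun j => c j 0), ?_⟩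
    ext i j
    have h := congrFun (hc j) i
    rw [Fin.sum_univ_succ] at h
    simp only [Finset.sum_apply, Pi.smul_apply, Pi.add_apply, Fin.cons_zero, Fin.cons_succ,
      smul_eq_mul, mul_one] at h
    simp only [psi2, Matrix.of_apply, Pi.add_apply, Matrix.mulVec, dotProduct]
    rw [← h, add_comm (c j 0)]
    congr 1
    refine Finset.sum_congr rfl fun l _ => ?_
    rw [hab l]
    simp [Matrix.mulVec, dotProduct, mul_comm]
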